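/- For k ≥ 1 and φ ∈ ℝ, the multi-controlled phase unitary U_{k,φ} = I + (e^{iφ}−1)|1^k⟩⟨1^k| on k qubits has Pauli ℓ1-norm at most 3. Specifically, its Pauli coefficients are α_∅ = 1 + (e^{iφ}−1)/2^k for the identity string and α_{Z_S} = (e^{iφ}−1)(−1)^{|S|}/2^k for each nonempty S ⊆ [k], giving ‖U_{k,φ}‖_{1,P} = |1 + (e^{iφ}−1)2^{−k}| + (2^k−1)|e^{iφ}−1|2^{−k} ≤ 1 + |e^{iφ}−1| ≤ 3. -/

import Mathlib

/-!
For `U = 1 + c • |1^k⟩⟨1^k|` the Pauli coefficient `2^{-k} Tr(U σ^s)` equals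
`2^{-k} (Tr σ^s + c ⟨1^k|σ^s|1^k⟩)`. The trace of `σ^s` vanishes unless `s` is the identity
string, and the diagonal entry `⟨1^k|σ^s|1^k⟩ = ∏ⱼ ⟨1|σ^{s_j}|1⟩` vanishes unless every
factor is `I` or `Z`, each `Z` contributing a sign `-1`. So `U` is supported on the `2^k`
strings built from `I` and `Z`, and its Pauli ℓ1-norm is `|1 + c/2^k| + (2^k - 1)|c|/2^k`,
which the triangle inequality bounds by `1 + |c|`; for `c = e^{iφ} - 1` also `|c| ≤ 2`.
-/

open Matrix BigOperators
open scoped Kronecker ComplexOrder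

noncomputable def pauli1 : Fin 4 → Matrix (Fin 2) (Fin 2) ℂ
  | 0 => 1
  | 1 => !![0, 1; 1, 0]
  | 2 => !![0, -Complex.I; Complex.I, 0]
  | 3 => !![1, 0; 0, -1]

/-- The n-qubit Pauli operator indexed by `s : Fin n → Fin 4`, realized as the
tensor product of single-qubit Pauli matrices (entrywise product formula). -/
noncomputable def pauli {n : ℕ} (s : Fin n → Fin 4) :
    Matrix (Fin n → Fin 2) (Fin n → Fin 2) ℂ :=
  Matrix.of fun i j => ∏ k, pauli1 (s k) (i k) (j k)

/-- The Pauli coefficient `α_s = 2^{-n} Tr(A σ^s)`. -/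
noncomputable def pauliCoeff {n : ℕ} (A : Matrix (Fin n → Fin 2) (Fin n → Fin 2) ℂ)
    (s : Fin n → Fin 4) : ℂ :=
  (A * pauli s).trace / 2 ^ n

/-- Operator norm (largest singular value) of a matrix. -/
noncomputable def opNorm {m : Type*} [Fintype m] [DecidableEq m]
    (A : Matrix m m ℂ) : ℝ :=
  ‖Matrix.toEuclideanCLM (𝕜 := ℂ) A‖

/-- Trace norm `‖A‖₁ = Tr √(AᴴA)`. -/
noncomputable def traceNorm {m : Type*} [Fintype m] [DecidableEq m]
    (A : Matrix m m ℂ) : ℝ :=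
  (((Matrix.posSemidef_conjTranspose_mul_self A).1.eigenvectorUnitary.1 *
      diagonal (((↑) : ℝ → ℂ) ∘ Real.sqrt ∘ (Matrix.posSemidef_conjTranspose_mul_self A).1.eigenvalues) *
      (star (Matrix.posSemidef_conjTranspose_mul_self A).1.eigenvectorUnitary : Matrix m m ℂ)).trace).re

open Finset

lemma trace_pauli1 (a : Fin 4) : (pauli1 a).trace = if a = 0 then 2 else 0 := by
  fin_cases a <;> norm_num [pauli1, Matrix.trace_fin_two]

lemma pauli1_apply_one_one (a : Fin 4) :
    pauli1 a 1 1 = if a = 0 ∨ a = 3 then (if a = 3 then -1 else 1) else 0 := by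
  fin_cases a <;> simp [pauli1]

lemma trace_pauli {n : ℕ} (s : Fin n → Fin 4) :
    (pauli s).trace = if s = fun _ => 0 then 2 ^ n else 0 := by
  have : (pauli s).trace = ∏ j, (pauli1 (s j)).trace := by
    simp only [trace, Matrix.diag, pauli, of_apply]
    exact (Fintype.prod_sum fun j a => pauli1 (s j) a a).symm
  simp only [this, trace_pauli1, prod_ite_zero, mem_univ, true_implies, prod_const, card_univ,
    Fintype.card_fin, funext_iff]

lemma pauli_apply_one_one {n : ℕ} (s : Fin n → Fin 4) :
    pauli s (fun _ => 1) (fun _ => 1) =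
      if ∀ j, s j = 0 ∨ s j = 3 then (-1 : ℂ) ^ #(univ.filter fun j => s j = 3) else 0 := by
  simp only [pauli, of_apply, pauli1_apply_one_one, prod_ite_zero, mem_univ, true_implies,
    prod_ite, prod_const, one_pow, mul_one]

lemma pauliCoeff_add {n : ℕ} (A B : Matrix (Fin n → Fin 2) (Fin n → Fin 2) ℂ)
    (s : Fin n → Fin 4) : pauliCoeff (A + B) s = pauliCoeff A s + pauliCoeff B s := by
  simp only [pauliCoeff, add_mul, trace_add, add_div]

lemma pauliCoeff_smul {n : ℕ} (c : ℂ) (A : Matrix (Fin n → Fin 2) (Fin n → Fin 2) ℂ)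
    (s : Fin n → Fin 4) : pauliCoeff (c • A) s = c * pauliCoeff A s := by
  simp only [pauliCoeff, smul_mul, trace_smul, smul_eq_mul, mul_div_assoc]

lemma pauliCoeff_one {n : ℕ} (s : Fin n → Fin 4) :
    pauliCoeff 1 s = if s = fun _ => 0 then 1 else 0 := by
  rw [pauliCoeff, one_mul, trace_pauli]
  split_ifs <;> simp

lemma pauliCoeff_single {n : ℕ} (i j : Fin n → Fin 2) (c : ℂ) (s : Fin n → Fin 4) :
    pauliCoeff (single i j c) s = c * pauli s j i / 2 ^ n := by
  rw [pauliCoeff, trace_single_mul, smul_eq_mul]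

lemma pauliCoeff_one_add_smul_single_ones {n : ℕ} (c : ℂ) (s : Fin n → Fin 4) :
    pauliCoeff (1 + c • single (fun _ => 1) (fun _ => 1) (1 : ℂ)) s =
      if ∀ j, s j = 0 ∨ s j = 3 then
        (if s = fun _ => 0 then 1 + c / 2 ^ n
         else c * (-1) ^ #(univ.filter fun j => s j = 3) / 2 ^ n)
      else 0 := by
  rw [pauliCoeff_add, pauliCoeff_smul, pauliCoeff_one, pauliCoeff_single, pauli_apply_one_one]
  by_cases hs : s = fun _ => 0
  · subst hs
    simp [div_eq_mul_inv]
  · split_ifs <;> simp [mul_div_assoc]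

lemma card_filter_forall_eq_zero_or_eq_three (n : ℕ) :
    #(univ.filter fun s : Fin n → Fin 4 => ∀ j, s j = 0 ∨ s j = 3) = 2 ^ n := by
  have : (univ.filter fun s : Fin n → Fin 4 => ∀ j, s j = 0 ∨ s j = 3) =
      Fintype.piFinset fun _ => {0, 3} := by
    ext s
    simp [Fintype.mem_piFinset]
  simp [this, Fintype.card_piFinset]

lemma Finset.sum_ite_eq_add_card_sub_one_mul {α : Type*} [DecidableEq α] {T : Finset α} {a : α}
    {R : Type*} [Ring R] (ha : a ∈ T) (x y : R) :
    ∑ s ∈ T, (if s = a then x else y) = x + (#T - 1) * y := by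
  rw [← add_sum_erase T _ ha, if_pos rfl,
    sum_congr rfl fun s hs => if_neg (ne_of_mem_erase hs), sum_const, card_erase_of_mem ha,
    nsmul_eq_mul, Nat.cast_pred (card_pos.mpr ⟨a, ha⟩)]

lemma sum_norm_pauliCoeff_one_add_smul_single_ones {n : ℕ} (c : ℂ) :
    ∑ s : Fin n → Fin 4, ‖pauliCoeff (1 + c • single (fun _ => 1) (fun _ => 1) (1 : ℂ)) s‖ =
      ‖1 + c / 2 ^ n‖ + (2 ^ n - 1) * ‖c‖ / 2 ^ n := by
  have hnorm (s : Fin n → Fin 4) :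
      ‖pauliCoeff (1 + c • single (fun _ => 1) (fun _ => 1) (1 : ℂ)) s‖ =
        if ∀ j, s j = 0 ∨ s j = 3 then
          (if s = fun _ => 0 then ‖1 + c / 2 ^ n‖ else ‖c‖ / 2 ^ n) else 0 := by
    rw [pauliCoeff_one_add_smul_single_ones]
    split_ifs <;> simp
  have hzero : (fun _ => 0) ∈ (univ.filter fun s : Fin n → Fin 4 => ∀ j, s j = 0 ∨ s j = 3) := by
    simp
  rw [sum_congr rfl fun s _ => hnorm s, ← sum_filter, sum_ite_eq_add_card_sub_one_mul hzero,
    card_filter_forall_eq_zero_or_eq_three, Nat.cast_pow, Nat.cast_ofNat, mul_div_assoc]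

lemma norm_one_add_div_add_le (c : ℂ) (n : ℕ) :
    ‖1 + c / 2 ^ n‖ + (2 ^ n - 1) * ‖c‖ / 2 ^ n ≤ 1 + ‖c‖ := by
  have h : ‖1 + c / 2 ^ n‖ ≤ 1 + ‖c‖ / 2 ^ n := by
    simpa using norm_add_le (1 : ℂ) (c / 2 ^ n)
  calc ‖1 + c / 2 ^ n‖ + (2 ^ n - 1) * ‖c‖ / 2 ^ n
      ≤ 1 + ‖c‖ / 2 ^ n + (2 ^ n - 1) * ‖c‖ / 2 ^ n := by gcongr
    _ = 1 + ‖c‖ := by field_simp; ring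

lemma norm_exp_I_mul_ofReal_sub_one_le_two (φ : ℝ) :
    ‖Complex.exp (Complex.I * φ) - 1‖ ≤ 2 := by
  calc ‖Complex.exp (Complex.I * φ) - 1‖ ≤ ‖Complex.exp (Complex.I * φ)‖ + ‖(1 : ℂ)‖ :=
        norm_sub_le _ _
    _ = 2 := by rw [Complex.norm_exp_I_mul_ofReal, norm_one]; norm_num

theorem multi_controlled_phase_pauli_l1_general (k : ℕ) (φ : ℝ) :
    ∀ (e : ℂ), e = Complex.exp (Complex.I * φ) →
    ∀ (U : Matrix (Fin k → Fin 2) (Fin k → Fin 2) ℂ),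
      U = 1 + (e - 1) • Matrix.single (fun _ => 1) (fun _ => 1) (1 : ℂ) →
      (∀ s : Fin k → Fin 4,
        pauliCoeff U s =
          if ∀ j, s j = 0 ∨ s j = 3 then
            (if s = fun _ => 0 then 1 + (e - 1) / 2 ^ k
             else (e - 1) * (-1) ^ ((Finset.univ.filter fun j => s j = 3).card) / 2 ^ k)
          else 0) ∧
      (∑ s : Fin k → Fin 4, ‖pauliCoeff U s‖)
          = ‖1 + (e - 1) / 2 ^ k‖
            + (2 ^ k - 1) * ‖e - 1‖ / 2 ^ k ∧
      ‖1 + (e - 1) / 2 ^ k‖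
            + (2 ^ k - 1) * ‖e - 1‖ / 2 ^ k
          ≤ 1 + ‖e - 1‖ ∧
      (1 : ℝ) + ‖e - 1‖ ≤ 3 := by
  rintro e rfl U rfl
  refine ⟨pauliCoeff_one_add_smul_single_ones _, sum_norm_pauliCoeff_one_add_smul_single_ones _,
    norm_one_add_div_add_le _ _, ?_⟩
  linarith [norm_exp_I_mul_ofReal_sub_one_le_two φ]

/-- The multi-controlled phase unitary
`U_{k,φ} = I + (e^{iφ}−1)|1^k⟩⟨1^k|` has the stated Pauli coefficients and
Pauli ℓ1-norm at most `3`. -/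
theorem multi_controlled_phase_pauli_l1 (k : ℕ) (hk : 1 ≤ k) (φ : ℝ) :
    ∀ (e : ℂ), e = Complex.exp (Complex.I * φ) →
    ∀ (U : Matrix (Fin k → Fin 2) (Fin k → Fin 2) ℂ),
      U = 1 + (e - 1) • Matrix.single (fun _ => 1) (fun _ => 1) (1 : ℂ) →
      (∀ s : Fin k → Fin 4,
        pauliCoeff U s =
          if ∀ j, s j = 0 ∨ s j = 3 then
            (if s = fun _ => 0 then 1 + (e - 1) / 2 ^ k
             else (e - 1) * (-1) ^ ((Finset.univ.filter fun j => s j = 3).card) / 2 ^ k)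
          else 0) ∧
      (∑ s : Fin k → Fin 4, ‖pauliCoeff U s‖)
          = ‖1 + (e - 1) / 2 ^ k‖
            + (2 ^ k - 1) * ‖e - 1‖ / 2 ^ k ∧
      ‖1 + (e - 1) / 2 ^ k‖
            + (2 ^ k - 1) * ‖e - 1‖ / 2 ^ k
          ≤ 1 + ‖e - 1‖ ∧
      (1 : ℝ) + ‖e - 1‖ ≤ 3 :=
  multi_controlled_phase_pauli_l1_general k φ
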